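/- Let T, C be nonnegative integrable random variables and for β > 0 define h_β(T,C) = max{C, β − T} and Y_β = T + C + h_β(T,C). Then the map β ↦ E[Y_β] − E[Y_β²]/(2β) is continuous and strictly increasing on (0, ∞) wherever the expectations are finite, and it is negative as β → 0⁺ and positive for sufficiently large β; hence the fixed-point equation E[Y_β] = E[Y_β²]/(2β) has a unique solution β* > 0. -/

import Mathlib

/-!
With the excess `Z_β = Y_β − β = C + (T + C − β)⁺`, expanding the square gives
`F β = β / 2 − E[Z_β²] / (2β)`. Since `Z_β ≥ C ≥ 0` is nonincreasing in `β`, so is `E[Z_β²]`,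
and `F` is strictly increasing. Jensen gives `E[Z_β²] ≥ (E C)²`, so `F < 0` on `(0, E C)`, and
`Z_β ≤ Y_1` gives `F > 0` beyond `√E[Y_1²]`; continuity is dominated convergence (with bound
`Y_1²`), and the intermediate value theorem provides the root.
-/

open MeasureTheory Set

theorem StrictMonoOn.existsUnique_eq_of_continuousOn {X α : Type*} [LinearOrder X]
    [TopologicalSpace X] [LinearOrder α] [TopologicalSpace α] [OrderClosedTopology α]
    {s : Set X} {f : X → α} (hf : StrictMonoOn f s) (hs : IsPreconnected s)
    (hc : ContinuousOn f s) {a b : X} (ha : a ∈ s) (hb : b ∈ s) {y : α}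
    (hya : f a ≤ y) (hyb : y ≤ f b) : ∃! x, x ∈ s ∧ f x = y := by
  obtain ⟨x, hx, rfl⟩ := hs.intermediate_value ha hb hc ⟨hya, hyb⟩
  exact ⟨x, ⟨hx, rfl⟩, fun x' hx' => hf.injOn hx'.1 hx hx'.2⟩

section Objective

variable {F G : ℝ → ℝ}

theorem strictMonoOn_of_eq_half_sub_div (hF : ∀ β > 0, F β = β / 2 - G β / (2 * β))
    (hG : AntitoneOn G (Ioi 0)) (hG0 : ∀ β > 0, 0 ≤ G β) : StrictMonoOn F (Ioi 0) := by
  intro a (ha : 0 < a) b (hb : 0 < b) hab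
  have : G b / (2 * b) ≤ G a / (2 * a) := by
    gcongr
    · exact hG0 a ha
    · exact hG ha hb hab.le
  rw [hF a ha, hF b hb]
  linarith

theorem continuousOn_of_eq_half_sub_div (hF : ∀ β > 0, F β = β / 2 - G β / (2 * β))
    (hG : ContinuousOn G (Ioi 0)) : ContinuousOn F (Ioi 0) := by
  refine ContinuousOn.congr ?_ hF
  exact (continuousOn_id.div_const 2).sub
    (hG.div (continuousOn_const.mul continuousOn_id) fun β (hβ : 0 < β) => by positivity)

theorem neg_of_eq_half_sub_div (hF : ∀ β > 0, F β = β / 2 - G β / (2 * β)) {m β : ℝ}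
    (hβ : 0 < β) (hβm : β < m) (hm : m ^ 2 ≤ G β) : F β < 0 := by
  have : β ^ 2 < G β := by nlinarith
  rw [hF β hβ, sub_neg, lt_div_iff₀ (by positivity)]
  nlinarith

theorem pos_of_eq_half_sub_div (hF : ∀ β > 0, F β = β / 2 - G β / (2 * β)) {Q β : ℝ}
    (hQ : G β ≤ Q) (hβ : √Q < β) : 0 < F β := by
  have hβ0 : 0 < β := (Real.sqrt_nonneg Q).trans_lt hβ
  have : G β < β ^ 2 := hQ.trans_lt ((Real.sqrt_lt' hβ0).1 hβ)
  rw [hF β hβ0, sub_pos, div_lt_iff₀ (by positivity)]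
  nlinarith

theorem optimal_threshold_of_eq_half_sub_div (hF : ∀ β > 0, F β = β / 2 - G β / (2 * β))
    {m Q : ℝ} (hm : 0 < m) (hanti : AntitoneOn G (Ioi 0)) (hcont : ContinuousOn G (Ioi 0))
    (hlow : ∀ β > 0, m ^ 2 ≤ G β) (hup : ∀ β > 0, G β ≤ Q) :
    ContinuousOn F (Ioi 0) ∧ StrictMonoOn F (Ioi 0) ∧
      (∃ ε > 0, ∀ β : ℝ, 0 < β → β < ε → F β < 0) ∧ (∃ M : ℝ, ∀ β : ℝ, M < β → 0 < F β) ∧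
      ∃! βstar : ℝ, 0 < βstar ∧ F βstar = 0 := by
  have hFcont := continuousOn_of_eq_half_sub_div hF hcont
  have hFmono := strictMonoOn_of_eq_half_sub_div hF hanti fun β hβ =>
    (sq_nonneg m).trans (hlow β hβ)
  have hneg : ∀ β, 0 < β → β < m → F β < 0 := fun β hβ hβm =>
    neg_of_eq_half_sub_div hF hβ hβm (hlow β hβ)
  have hpos : ∀ β, √Q < β → 0 < F β := fun β hβ =>
    pos_of_eq_half_sub_div hF (hup β ((Real.sqrt_nonneg Q).trans_lt hβ)) hβ
  refine ⟨hFcont, hFmono, ⟨m, hm, hneg⟩, ⟨√Q, hpos⟩, ?_⟩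
  exact hFmono.existsUnique_eq_of_continuousOn isPreconnected_Ioi hFcont (half_pos hm)
    (by positivity : 0 < √Q + 1) (hneg _ (half_pos hm) (half_lt_self hm)).le
    (hpos _ (lt_add_one _)).le

end Objective

section SecondMoment

variable {Ω : Type*} [MeasurableSpace Ω] {μ : Measure Ω}

theorem sq_integral_le_integral_sq [IsProbabilityMeasure μ] {f : Ω → ℝ} (hf : MemLp f 2 μ) :
    (∫ ω, f ω ∂μ) ^ 2 ≤ ∫ ω, f ω ^ 2 ∂μ := by
  have := ProbabilityTheory.variance_nonneg f μ
  rw [ProbabilityTheory.variance_eq_sub hf] at this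
  simpa using this

theorem integral_sub_integral_sq_div_eq [IsProbabilityMeasure μ] {f : Ω → ℝ}
    (hf : MemLp f 2 μ) {β : ℝ} (hβ : β ≠ 0) :
    (∫ ω, f ω ∂μ) - (∫ ω, f ω ^ 2 ∂μ) / (2 * β) = β / 2 - (∫ ω, (f ω - β) ^ 2 ∂μ) / (2 * β) := by
  have hf1 : Integrable f μ := hf.integrable one_le_two
  have hexp : ∫ ω, (f ω - β) ^ 2 ∂μ = (∫ ω, f ω ^ 2 ∂μ) - 2 * β * ∫ ω, f ω ∂μ + β ^ 2 := by
    have hsq : (fun ω => (f ω - β) ^ 2) = fun ω => f ω ^ 2 - 2 * β * f ω + β ^ 2 := by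
      funext ω; ring
    have hint : Integrable (fun ω => f ω ^ 2 - 2 * β * f ω) μ :=
      hf.integrable_sq.sub (hf1.const_mul _)
    rw [hsq, integral_add hint (integrable_const _),
      integral_sub hf.integrable_sq (hf1.const_mul _), integral_const_mul]
    simp
  rw [hexp]
  field_simp
  ring

theorem integral_sq_mono {f g : Ω → ℝ} (hf : Integrable (fun ω => f ω ^ 2) μ)
    (hg : Integrable (fun ω => g ω ^ 2) μ) (hf0 : ∀ ω, 0 ≤ f ω) (hfg : ∀ ω, f ω ≤ g ω) :
    ∫ ω, f ω ^ 2 ∂μ ≤ ∫ ω, g ω ^ 2 ∂μ :=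
  integral_mono hf hg fun ω => pow_le_pow_left₀ (hf0 ω) (hfg ω) 2

theorem sq_integral_le_integral_sq_of_le [IsProbabilityMeasure μ] {f g : Ω → ℝ}
    (hg : MemLp g 2 μ) (hf0 : ∀ ω, 0 ≤ f ω) (hfg : ∀ ω, f ω ≤ g ω) :
    (∫ ω, f ω ∂μ) ^ 2 ≤ ∫ ω, g ω ^ 2 ∂μ :=
  calc (∫ ω, f ω ∂μ) ^ 2 ≤ (∫ ω, g ω ∂μ) ^ 2 :=
        pow_le_pow_left₀ (integral_nonneg hf0)
          (integral_mono_of_nonneg (.of_forall hf0) (hg.integrable one_le_two) (.of_forall hfg)) 2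
    _ ≤ ∫ ω, g ω ^ 2 ∂μ := sq_integral_le_integral_sq hg

variable {Z : ℝ → Ω → ℝ} {s : Set ℝ}

theorem antitoneOn_integral_sq (hZ : ∀ β ∈ s, Integrable (fun ω => Z β ω ^ 2) μ)
    (hZ0 : ∀ β ω, 0 ≤ Z β ω) (hanti : ∀ ω, AntitoneOn (Z · ω) s) :
    AntitoneOn (fun β => ∫ ω, Z β ω ^ 2 ∂μ) s :=
  fun _ ha _ hb hab => integral_sq_mono (hZ _ hb) (hZ _ ha) (hZ0 _) fun ω => hanti ω ha hb hab

theorem continuousOn_integral_sq (hZ : ∀ β ∈ s, AEStronglyMeasurable (Z β) μ)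
    (hZ0 : ∀ β ω, 0 ≤ Z β ω) {g : Ω → ℝ} (hg : Integrable (fun ω => g ω ^ 2) μ)
    (hZg : ∀ β ∈ s, ∀ ω, Z β ω ≤ g ω) (hcont : ∀ ω, Continuous (Z · ω)) :
    ContinuousOn (fun β => ∫ ω, Z β ω ^ 2 ∂μ) s := by
  refine continuousOn_of_dominated (fun β hβ => (hZ β hβ).pow 2) (fun β hβ => ?_) hg
    (.of_forall fun ω => ((hcont ω).pow 2).continuousOn)
  refine .of_forall fun ω => ?_
  rw [Real.norm_eq_abs, abs_of_nonneg (sq_nonneg _)]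
  exact pow_le_pow_left₀ (hZ0 β ω) (hZg β hβ ω) 2

end SecondMoment

theorem optimal_threshold_exists_unique_general
    {Ω : Type*} [MeasureSpace Ω] (μ : Measure Ω) [IsProbabilityMeasure μ]
    (T C : Ω → ℝ)
    (hC0 : ∀ ω, 0 ≤ C ω)
    (hCpos : 0 < ∫ ω, C ω ∂μ)
    (Y : ℝ → Ω → ℝ)
    (hY : ∀ β ω, Y β ω = T ω + C ω + max (C ω) (β - T ω))
    (hYint : ∀ β > 0, Integrable (Y β) μ)
    (hY2int : ∀ β > 0, Integrable (fun ω => (Y β ω) ^ 2) μ)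
    (F : ℝ → ℝ)
    (hF : ∀ β, F β = (∫ ω, Y β ω ∂μ) - (∫ ω, (Y β ω) ^ 2 ∂μ) / (2 * β)) :
    ContinuousOn F (Set.Ioi 0) ∧
    StrictMonoOn F (Set.Ioi 0) ∧
    (∃ ε > 0, ∀ β : ℝ, 0 < β → β < ε → F β < 0) ∧
    (∃ M : ℝ, ∀ β : ℝ, M < β → 0 < F β) ∧
    (∃! βstar : ℝ, 0 < βstar ∧ F βstar = 0) := by
  have hZ : ∀ β ω, Y β ω - β = C ω + max (T ω + C ω - β) 0 := fun β ω => by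
    rw [hY]; grind
  have hCZ : ∀ β ω, C ω ≤ Y β ω - β := fun β ω => by
    rw [hZ]; exact le_add_of_nonneg_right (le_max_right _ _)
  have hZ0 : ∀ β ω, 0 ≤ Y β ω - β := fun β ω => (hC0 ω).trans (hCZ β ω)
  have hZY : ∀ β > 0, ∀ ω, Y β ω - β ≤ Y 1 ω := fun β hβ ω => by
    rw [hZ, hY]; grind
  have hL2 : ∀ β > 0, MemLp (Y β) 2 μ := fun β hβ =>
    (memLp_two_iff_integrable_sq (hYint β hβ).1).2 (hY2int β hβ)
  have hZL2 : ∀ β > 0, MemLp (fun ω => Y β ω - β) 2 μ := fun β hβ =>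
    (hL2 β hβ).sub (memLp_const β)
  refine optimal_threshold_of_eq_half_sub_div
    (fun β hβ => (hF β).trans (integral_sub_integral_sq_div_eq (hL2 β hβ) hβ.ne')) hCpos
    (antitoneOn_integral_sq (fun β hβ => (hZL2 β hβ).integrable_sq) hZ0
      fun ω _ _ _ _ hab => by simp only [hZ]; gcongr)
    (continuousOn_integral_sq (fun β hβ => (hZL2 β hβ).1) hZ0 (hY2int 1 one_pos) hZY
      fun ω => by simp only [hZ]; fun_prop)
    (fun β hβ => sq_integral_le_integral_sq_of_le (hZL2 β hβ) hC0 (hCZ β))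
    (fun β hβ => integral_sq_mono (hZL2 β hβ).integrable_sq (hY2int 1 one_pos) (hZ0 β) (hZY β hβ))

/-- Characterization of the optimal long-wait threshold `β*`. With
`Y_β = T + C + max{C, β − T}` and
`F(β) = E[Y_β] − E[Y_β²]/(2β)`, the map `F` is continuous and strictly
increasing on `(0, ∞)`, negative near `0⁺`, positive for large `β`; hence the
equation `E[Y_β] = E[Y_β²]/(2β)` has a unique solution `β* > 0`. -/
theorem optimal_threshold_exists_unique
    {Ω : Type*} [MeasureSpace Ω] (μ : Measure Ω) [IsProbabilityMeasure μ]
    (T C : Ω → ℝ)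
    (hT0 : ∀ ω, 0 ≤ T ω) (hC0 : ∀ ω, 0 ≤ C ω)
    (hTint : Integrable T μ) (hCint : Integrable C μ)
    (hTpos : 0 < ∫ ω, T ω ∂μ) (hCpos : 0 < ∫ ω, C ω ∂μ)
    (hsq : Integrable (fun ω => (T ω + C ω) ^ 2) μ)
    (Y : ℝ → Ω → ℝ)
    (hY : ∀ β ω, Y β ω = T ω + C ω + max (C ω) (β - T ω))
    (hYint : ∀ β > 0, Integrable (Y β) μ)
    (hY2int : ∀ β > 0, Integrable (fun ω => (Y β ω) ^ 2) μ)
    (F : ℝ → ℝ)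
    (hF : ∀ β, F β = (∫ ω, Y β ω ∂μ) - (∫ ω, (Y β ω) ^ 2 ∂μ) / (2 * β)) :
    ContinuousOn F (Set.Ioi 0) ∧
    StrictMonoOn F (Set.Ioi 0) ∧
    (∃ ε > 0, ∀ β : ℝ, 0 < β → β < ε → F β < 0) ∧
    (∃ M : ℝ, ∀ β : ℝ, M < β → 0 < F β) ∧
    (∃! βstar : ℝ, 0 < βstar ∧ F βstar = 0) :=
  optimal_threshold_exists_unique_general μ T C hC0 hCpos Y hY hYint hY2int F hF
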